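/- arXiv:1802.04708 — 3 statements merged into one kernel-verified Lean document; each statement's English description precedes it below -/
import Mathlib

section
/- Let G be a simple undirected graph on vertex set Fin n with no self-loops, n ≥ 1. Construct the unary NFA A(G) with states q_i^j for 0 ≤ i < n, 1 ≤ j ≤ 4; start state q_0^1; transitions q_i^1 → q_{i+1}^1 for i < n-1; transitions q_i^j → q_k^{j+1} for j = 1,2,3 whenever {v_i, v_k} is an edge of G; transitions q_i^4 → q_{i+1}^4 for i < n-1; unique accept state q_{n-1}^4. Then A(G) accepts the word a^{n+2} if and only if G contains a triangle. -/
/-- The one-step transition relation of an NFA: `R p q` iff some letter takes `p` to `q`. -/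
def NFA.rel {α σ : Type*} (A : NFA α σ) (p q : σ) : Prop := ∃ a, q ∈ A.step p a

/-- There is a walk of exactly `m` steps of the relation `R` from `s` to `t`. -/
def RelPath {σ : Type*} (R : σ → σ → Prop) (m : ℕ) (s t : σ) : Prop :=
  ∃ p : ℕ → σ, p 0 = s ∧ p m = t ∧ ∀ i < m, R (p i) (p (i + 1))

/-- An NFA is acyclic if its transition diagram contains no nonempty cycle. -/
def NFA.Acyclic {α σ : Type*} (A : NFA α σ) : Prop :=
  ¬ ∃ (q : σ) (m : ℕ), 0 < m ∧ RelPath A.rel m q q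

/-- The four-layer unary NFA built from a simple graph `G` on `Fin n` for the triangle
reduction.  States are `(i, j)` with `i : Fin n` a vertex and `j : Fin 4` a layer
(layers 1–4 of the paper are `0,1,2,3` here).  Layer 0 and layer 3 are chains
`(i,·) → (i+1,·)`, and `(i, j) → (k, j+1)` is a transition iff `G.Adj i k`.
The start state is `(0, 0)` and the unique accept state is `(n-1, 3)`. -/
def triangleNFA (n : ℕ) [NeZero n] (G : SimpleGraph (Fin n)) :
    NFA Unit (Fin n × Fin 4) where
  step p _ :=
    {q | ((p.2 = 0 ∨ p.2 = 3) ∧ q.2 = p.2 ∧ (q.1 : ℕ) = (p.1 : ℕ) + 1) ∨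
         ((q.2 : ℕ) = (p.2 : ℕ) + 1 ∧ G.Adj p.1 q.1)}
  start := {(0, 0)}
  accept := {q | (q.1 : ℕ) = n - 1 ∧ q.2 = 3}

lemma relPath_succ_left {σ : Type*} {R : σ → σ → Prop} {m : ℕ} {s t : σ} :
    RelPath R (m + 1) s t ↔ ∃ u, R s u ∧ RelPath R m u t := by
  constructor
  · rintro ⟨p, h0, hm, hs⟩
    exact ⟨p 1, h0 ▸ hs 0 (Nat.succ_pos _), fun i => p (i + 1), rfl, hm,
      fun i hi => hs (i + 1) (by omega)⟩
  · rintro ⟨u, hsu, p, h0, hm, hs⟩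
    refine ⟨fun i => if i = 0 then s else p (i - 1), by simp, by simp [hm], ?_⟩
    intro i hi
    rcases Nat.eq_zero_or_pos i with h | h
    · simpa [h, h0] using hsu
    · have : i ≠ 0 := h.ne'
      simp only [this, if_false, Nat.succ_ne_zero]
      have : i - 1 + 1 = i := by omega
      simpa [this] using hs (i - 1) (by omega)

lemma mem_evalFrom_replicate {σ : Type*} (A : NFA Unit σ) :
    ∀ (m : ℕ) (S : Set σ) (q : σ),
      q ∈ A.evalFrom S (List.replicate m ()) ↔ ∃ s ∈ S, RelPath A.rel m s q := by
  intro m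
  induction m with
  | zero =>
    intro S q
    simp only [List.replicate, NFA.evalFrom_nil]
    constructor
    · intro h; exact ⟨q, h, fun _ => q, rfl, rfl, by omega⟩
    · rintro ⟨s, hs, p, h0, hm, -⟩; rwa [← hm, h0]
  | succ m ih =>
    intro S q
    have : List.replicate (m + 1) () = () :: List.replicate m () := rfl
    rw [this]
    have hev : A.evalFrom S (() :: List.replicate m ()) =
        A.evalFrom (A.stepSet S ()) (List.replicate m ()) := rfl
    rw [hev, ih]
    constructor
    · rintro ⟨u, hu, hp⟩
      rw [NFA.mem_stepSet] at hu
      obtain ⟨s, hs, hstep⟩ := hu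
      exact ⟨s, hs, relPath_succ_left.2 ⟨u, ⟨(), hstep⟩, hp⟩⟩
    · rintro ⟨s, hs, hp⟩
      obtain ⟨u, ⟨a, hstep⟩, hp⟩ := relPath_succ_left.1 hp
      exact ⟨u, NFA.mem_stepSet.2 ⟨s, hs, hstep⟩, hp⟩


/-- The four-layer NFA built from G accepts the word a^(n+2) iff G has a triangle. -/
theorem triangleNFA_accepts_iff_triangle {n : ℕ} [NeZero n] (G : SimpleGraph (Fin n)) :
    List.replicate (n + 2) () ∈ (triangleNFA n G).accepts ↔
      ∃ i j k : Fin n, G.Adj i j ∧ G.Adj j k ∧ G.Adj k i := by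
  have hn : 1 ≤ n := Nat.one_le_iff_ne_zero.2 (NeZero.ne n)
  rw [NFA.mem_accepts]
  constructor
  · rintro ⟨acc, hacc, hev⟩
    rw [mem_evalFrom_replicate] at hev
    obtain ⟨s, hs, p, h0, hm, hstep⟩ := hev
    have hs' : s = ((0 : Fin n), (0 : Fin 4)) := hs
    rw [hs'] at h0
    obtain ⟨haccv, haccl⟩ : ((acc.1 : ℕ) = n - 1 ∧ acc.2 = 3) := hacc
    -- step characterization
    have hst : ∀ t < n + 2,
        (((p t).2 = 0 ∨ (p t).2 = 3) ∧ (p (t+1)).2 = (p t).2 ∧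
          ((p (t+1)).1 : ℕ) = ((p t).1 : ℕ) + 1) ∨
        (((p (t+1)).2 : ℕ) = ((p t).2 : ℕ) + 1 ∧ G.Adj (p t).1 (p (t+1)).1) := by
      intro t ht
      obtain ⟨a, ha⟩ := hstep t ht
      exact ha
    -- find the first time layer ≠ 0
    have hex : ∃ t, (p t).2 ≠ 0 := ⟨n + 2, by rw [hm, haccl]; decide⟩
    classical
    set t := Nat.find hex with htdef
    have htP : (p t).2 ≠ 0 := Nat.find_spec hex
    have htmin : ∀ s < t, (p s).2 = 0 := fun s hs =>
      of_not_not (Nat.find_min hex hs)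
    have ht0 : 0 < t := Nat.pos_of_ne_zero (fun h => htP (by simp [h, h0]))
    have htle : t ≤ n + 2 := Nat.find_le (by rw [hm, haccl]; decide)
    set t1 := t - 1 with ht1def
    have ht1 : t = t1 + 1 := by omega
    -- chain along layer 0
    have hchain0 : ∀ s ≤ t1, ((p s).1 : ℕ) = s ∧ (p s).2 = 0 := by
      intro s hsle
      induction s with
      | zero => rw [h0]; exact ⟨rfl, rfl⟩
      | succ s ihs =>
        obtain ⟨hv, hl⟩ := ihs (by omega)
        have hlt : s < n + 2 := by omega
        have hl1 : (p (s+1)).2 = 0 := htmin _ (by omega)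
        rcases hst s hlt with ⟨-, -, hv'⟩ | ⟨hl', -⟩
        · exact ⟨by omega, hl1⟩
        · rw [hl1, hl] at hl'; simp at hl'
    obtain ⟨hvt1, hlt1⟩ := hchain0 t1 le_rfl
    have ht1n : t1 < n := hvt1 ▸ (p t1).1.isLt
    have htn : t ≤ n := by omega
    -- jump 1
    have hj1 : ((p t).2 : ℕ) = 1 ∧ G.Adj (p t1).1 (p t).1 := by
      have hh := hst t1 (by omega)
      rw [← ht1] at hh
      rcases hh with ⟨-, hl, -⟩ | ⟨hl, hadj⟩
      · exact absurd (hl.trans hlt1) htP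
      · rw [hlt1] at hl; exact ⟨by simpa using hl, hadj⟩
    -- jump 2
    have hj2 : ((p (t+1)).2 : ℕ) = 2 ∧ G.Adj (p t).1 (p (t+1)).1 := by
      have h1 := hj1.1
      rcases hst t (by omega) with ⟨h03, -, -⟩ | ⟨hl, hadj⟩
      · rcases h03 with h | h <;> rw [h] at h1 <;> exact absurd h1 (by decide)
      · refine ⟨by omega, hadj⟩
    -- jump 3
    have hj3 : ((p (t+2)).2 : ℕ) = 3 ∧ G.Adj (p (t+1)).1 (p (t+2)).1 := by
      have h2 := hj2.1
      have hh := hst (t+1) (by omega)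
      rw [show t + 1 + 1 = t + 2 from rfl] at hh
      rcases hh with ⟨h03, -, -⟩ | ⟨hl, hadj⟩
      · rcases h03 with h | h <;> rw [h] at h2 <;> exact absurd h2 (by decide)
      · refine ⟨by omega, hadj⟩
    -- chain along layer 3
    have hchain3 : ∀ d, t + 2 + d ≤ n + 2 →
        ((p (t+2+d)).2 : ℕ) = 3 ∧ ((p (t+2+d)).1 : ℕ) = ((p (t+2)).1 : ℕ) + d := by
      intro d
      induction d with
      | zero => intro _; exact ⟨hj3.1, rfl⟩
      | succ d ihd =>
        intro hle
        obtain ⟨hl, hv⟩ := ihd (by omega)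
        have hlt : t + 2 + d < n + 2 := by omega
        rcases hst (t+2+d) hlt with ⟨-, hl', hv'⟩ | ⟨hl', -⟩
        · constructor
          · have : t + 2 + (d + 1) = t + 2 + d + 1 := by omega
            rw [this, hl', hl]
          · have : t + 2 + (d + 1) = t + 2 + d + 1 := by omega
            rw [this]; omega
        · exfalso
          have h4 : ((p (t+2+d+1)).2 : ℕ) < 4 := (p (t+2+d+1)).2.isLt
          omega
    have hfin := hchain3 (n - t) (by omega)
    have heq : t + 2 + (n - t) = n + 2 := by omega
    rw [heq, hm] at hfin
    have hvt2 : ((p (t+2)).1 : ℕ) = t1 := by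
      have := hfin.2
      omega
    have hki : (p (t+2)).1 = (p t1).1 := Fin.ext (by rw [hvt2, hvt1])
    exact ⟨(p t1).1, (p t).1, (p (t+1)).1, hj1.2, hj2.2, hki ▸ hj3.2⟩
  · rintro ⟨i, j, k, hij, hjk, hki⟩
    have hin : (i : ℕ) < n := i.isLt
    set q : ℕ → Fin n × Fin 4 := fun s =>
      if h : s ≤ (i : ℕ) then (⟨s, lt_of_le_of_lt h i.isLt⟩, 0)
      else if s = (i : ℕ) + 1 then (j, 1)
      else if s = (i : ℕ) + 2 then (k, 2)
      else (⟨min (s - 3) (n - 1), lt_of_le_of_lt (min_le_right _ _) (by omega)⟩, 3)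
      with hq
    refine ⟨q (n + 2), ?_, ?_⟩
    · have h1 : ¬ (n + 2 ≤ (i : ℕ)) := by omega
      have h2 : n + 2 ≠ (i : ℕ) + 1 := by omega
      have h3 : n + 2 ≠ (i : ℕ) + 2 := by omega
      simp only [hq, h1, h2, h3, dif_neg, if_neg, not_false_iff]
      refine ⟨?_, rfl⟩
      simp only [Fin.val_mk]
      omega
    · rw [mem_evalFrom_replicate]
      refine ⟨((0 : Fin n), (0 : Fin 4)), rfl, q, ?_, rfl, ?_⟩
      · simp only [hq, Nat.zero_le, dif_pos]
        ext <;> simp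
      · intro s hsl
        rcases lt_or_ge s (i : ℕ) with h | h
        · -- chain in layer 0
          have hs1 : s ≤ (i : ℕ) := le_of_lt h
          have hs2 : s + 1 ≤ (i : ℕ) := h
          simp only [hq, dif_pos hs1, dif_pos hs2]
          exact ⟨(), Or.inl ⟨Or.inl rfl, rfl, rfl⟩⟩
        · rcases eq_or_lt_of_le h with h | h
          · -- jump 1 at s = i
            have hs1 : s ≤ (i : ℕ) := le_of_eq h.symm
            have hs2 : ¬ (s + 1 ≤ (i : ℕ)) := by omega
            have hs3 : s + 1 = (i : ℕ) + 1 := by omega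
            simp only [hq, dif_pos hs1, dif_neg hs2, if_pos hs3]
            refine ⟨(), Or.inr ⟨rfl, ?_⟩⟩
            have : (⟨s, lt_of_le_of_lt hs1 i.isLt⟩ : Fin n) = i := Fin.ext (by simp [← h])
            rw [this]; exact hij
          · rcases Nat.eq_or_lt_of_le h with h' | h'
            · -- jump 2 at s = i + 1
              have hs1 : ¬ (s ≤ (i : ℕ)) := by omega
              have hs2 : s = (i : ℕ) + 1 := by omega
              have hs3 : ¬ (s + 1 ≤ (i : ℕ)) := by omega
              have hs4 : s + 1 ≠ (i : ℕ) + 1 := by omega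
              have hs5 : s + 1 = (i : ℕ) + 2 := by omega
              simp only [hq, dif_neg hs1, if_pos hs2, dif_neg hs3, if_neg hs4, if_pos hs5]
              exact ⟨(), Or.inr ⟨rfl, hjk⟩⟩
            · rcases Nat.eq_or_lt_of_le h' with h'' | h''
              · -- jump 3 at s = i + 2
                have hs1 : ¬ (s ≤ (i : ℕ)) := by omega
                have hs2 : s ≠ (i : ℕ) + 1 := by omega
                have hs3 : s = (i : ℕ) + 2 := by omega
                have hs4 : ¬ (s + 1 ≤ (i : ℕ)) := by omega
                have hs5 : s + 1 ≠ (i : ℕ) + 1 := by omega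
                have hs6 : s + 1 ≠ (i : ℕ) + 2 := by omega
                simp only [hq, dif_neg hs1, if_neg hs2, if_pos hs3, dif_neg hs4, if_neg hs5,
                  if_neg hs6]
                refine ⟨(), Or.inr ⟨rfl, ?_⟩⟩
                have : (⟨min (s + 1 - 3) (n - 1),
                    lt_of_le_of_lt (min_le_right _ _) (by omega)⟩ : Fin n) = i :=
                  Fin.ext (by simp only [Fin.val_mk]; omega)
                rw [this]; exact hki
              · -- chain in layer 3, s ≥ i + 3
                have hs1 : ¬ (s ≤ (i : ℕ)) := by omega
                have hs2 : s ≠ (i : ℕ) + 1 := by omega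
                have hs3 : s ≠ (i : ℕ) + 2 := by omega
                have hs4 : ¬ (s + 1 ≤ (i : ℕ)) := by omega
                have hs5 : s + 1 ≠ (i : ℕ) + 1 := by omega
                have hs6 : s + 1 ≠ (i : ℕ) + 2 := by omega
                simp only [hq, dif_neg hs1, if_neg hs2, if_neg hs3, dif_neg hs4, if_neg hs5,
                  if_neg hs6]
                refine ⟨(), Or.inl ⟨Or.inr rfl, rfl, ?_⟩⟩
                simp only [Fin.val_mk]
                omega
end

section
/- In the NFA A(G) constructed from a simple graph G on n vertices (four layers as described), every accepting path for a word a^r has the form: i steps within layer 1 ending at q_i^1, a transition to some q_j^2, a transition to some q_k^3, a transition to some q_l^4, then n-1-l steps within layer 4 ending at q_{n-1}^4; hence r = i + 3 + (n-1-l), and r = n+2 if and only if i = l. -/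
section triangleNFA

variable {n : ℕ} [NeZero n] {G : SimpleGraph (Fin n)}

theorem triangleNFA_rel_iff {s t : Fin n × Fin 4} :
    (triangleNFA n G).rel s t ↔
      ((s.2 = 0 ∨ s.2 = 3) ∧ t.2 = s.2 ∧ (t.1 : ℕ) = s.1 + 1) ∨
        ((t.2 : ℕ) = s.2 + 1 ∧ G.Adj s.1 t.1) := by
  simp [NFA.rel, triangleNFA]

theorem triangleNFA_rel_of_layer_eq {s t : Fin n × Fin 4}
    (h : (triangleNFA n G).rel s t) (hst : t.2 = s.2) :
    (s.2 = 0 ∨ s.2 = 3) ∧ (t.1 : ℕ) = s.1 + 1 := by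
  rcases triangleNFA_rel_iff.1 h with ⟨hs, -, hv⟩ | ⟨hst', -⟩
  · exact ⟨hs, hv⟩
  · simp [hst] at hst'

theorem triangleNFA_rel_layer_succ_of_ne {s t : Fin n × Fin 4}
    (h : (triangleNFA n G).rel s t) (hst : t.2 ≠ s.2) : (t.2 : ℕ) = s.2 + 1 := by
  rcases triangleNFA_rel_iff.1 h with ⟨-, hst', -⟩ | ⟨hst', -⟩
  · exact absurd hst' hst
  · exact hst'

variable {r : ℕ} {p : ℕ → Fin n × Fin 4}

theorem triangleNFA_path_vertex_eq_of_layer_eq_zero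
    (hstep : ∀ t < r, (triangleNFA n G).rel (p t) (p (t + 1))) (hp0 : p 0 = (0, 0)) :
    ∀ t ≤ r, (p t).2 = 0 → ((p t).1 : ℕ) = t := by
  intro t
  induction t with
  | zero => simp [hp0]
  | succ t ih =>
    intro ht h0
    have hrel := hstep t (by omega)
    by_cases hst : (p (t + 1)).2 = (p t).2
    · rw [(triangleNFA_rel_of_layer_eq hrel hst).2, ih (by omega) (hst ▸ h0)]
    · simpa [h0] using triangleNFA_rel_layer_succ_of_ne hrel hst

theorem triangleNFA_path_layer_succ_of_ne_zero_of_ne_three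
    (hstep : ∀ t < r, (triangleNFA n G).rel (p t) (p (t + 1))) {t : ℕ} (ht : t < r)
    (h0 : (p t).2 ≠ 0) (h3 : (p t).2 ≠ 3) : ((p (t + 1)).2 : ℕ) = (p t).2 + 1 := by
  have hrel := hstep t ht
  by_cases hst : (p (t + 1)).2 = (p t).2
  · have := (triangleNFA_rel_of_layer_eq hrel hst).1
    omega
  · exact triangleNFA_rel_layer_succ_of_ne hrel hst

theorem triangleNFA_path_stays_in_layer_three
    (hstep : ∀ t < r, (triangleNFA n G).rel (p t) (p (t + 1))) {a : ℕ} (ha : (p a).2 = 3) :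
    ∀ t, a ≤ t → t ≤ r → (p t).2 = 3 ∧ ((p t).1 : ℕ) = (p a).1 + (t - a) := by
  intro t hat
  induction t, hat using Nat.le_induction with
  | base => simp [ha]
  | succ t hat ih =>
    intro ht
    obtain ⟨h3, hv⟩ := ih (by omega)
    have hrel := hstep t (by omega)
    by_cases hst : (p (t + 1)).2 = (p t).2
    · refine ⟨hst.trans h3, ?_⟩
      have := (triangleNFA_rel_of_layer_eq hrel hst).2
      omega
    · have := triangleNFA_rel_layer_succ_of_ne hrel hst
      omega

theorem triangleNFA_path_layers_after_layer_zero
    (hstep : ∀ t < r, (triangleNFA n G).rel (p t) (p (t + 1))) (hr : (p r).2 = 3) {i : ℕ}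
    (hir : i < r) (hi : (p i).2 = 0) (hexit : (p (i + 1)).2 ≠ 0) :
    (p (i + 1)).2 = 1 ∧ (p (i + 2)).2 = 2 ∧ (p (i + 3)).2 = 3 ∧ i + 3 ≤ r := by
  have h1 : (p (i + 1)).2 = 1 := by
    have := triangleNFA_rel_layer_succ_of_ne (hstep i hir) (by omega)
    omega
  have hi1 : i + 1 < r := by
    by_contra h
    obtain rfl : r = i + 1 := by omega
    omega
  have h2 : (p (i + 2)).2 = 2 := by
    have : ((p (i + 2)).2 : ℕ) = (p (i + 1)).2 + 1 :=
      triangleNFA_path_layer_succ_of_ne_zero_of_ne_three hstep hi1 (by omega) (by omega)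
    omega
  have hi2 : i + 2 < r := by
    by_contra h
    obtain rfl : r = i + 2 := by omega
    omega
  have h3 : (p (i + 3)).2 = 3 := by
    have : ((p (i + 3)).2 : ℕ) = (p (i + 2)).2 + 1 :=
      triangleNFA_path_layer_succ_of_ne_zero_of_ne_three hstep hi2 (by omega) (by omega)
    omega
  exact ⟨h1, h2, h3, hi2⟩

end triangleNFA

/-- Every accepting path for a^r in the four-layer NFA has the form: i steps in
layer 1 ending at (i,0), a transition to some (j,1), then to some (k,2), then to
some (l,3), then n-1-l steps in layer 4; hence r = i + 3 + (n - 1 - l), and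
r = n + 2 iff i = l. -/
theorem triangleNFA_accepting_path_shape {n : ℕ} [NeZero n] (G : SimpleGraph (Fin n))
    (r : ℕ) (p : ℕ → Fin n × Fin 4)
    (hstart : p 0 ∈ (triangleNFA n G).start)
    (haccept : p r ∈ (triangleNFA n G).accept)
    (hstep : ∀ t < r, (triangleNFA n G).rel (p t) (p (t + 1))) :
    ∃ i j k l : Fin n,
      p (i : ℕ) = (i, 0) ∧
      p ((i : ℕ) + 1) = (j, 1) ∧
      p ((i : ℕ) + 2) = (k, 2) ∧
      p ((i : ℕ) + 3) = (l, 3) ∧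
      r = (i : ℕ) + 3 + (n - 1 - (l : ℕ)) ∧
      (r = n + 2 ↔ (i : ℕ) = (l : ℕ)) := by
  have hp0 : p 0 = (0, 0) := hstart
  obtain ⟨hvr, hlr⟩ : ((p r).1 : ℕ) = n - 1 ∧ (p r).2 = 3 := haccept
  set i := Nat.findGreatest (fun t => (p t).2 = 0) r
  have hi : (p i).2 = 0 :=
    Nat.findGreatest_spec (P := fun t => (p t).2 = 0) (Nat.zero_le r) (by simp [hp0])
  have hir : i < r := lt_of_le_of_ne (Nat.findGreatest_le r) (by rintro h; rw [h] at hi; omega)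
  have hexit : (p (i + 1)).2 ≠ 0 := Nat.findGreatest_is_greatest (lt_add_one i) hir
  have hvi := triangleNFA_path_vertex_eq_of_layer_eq_zero hstep hp0 i hir.le hi
  obtain ⟨h1, h2, h3, hi3⟩ := triangleNFA_path_layers_after_layer_zero hstep hlr hir hi hexit
  have hvl := (triangleNFA_path_stays_in_layer_three hstep h3 r hi3 le_rfl).2
  refine ⟨(p i).1, (p (i + 1)).1, (p (i + 2)).1, (p (i + 3)).1, ?_, ?_, ?_, ?_, ?_, ?_⟩
  · rw [hvi]; exact Prod.ext rfl hi
  · rw [hvi]; exact Prod.ext rfl h1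
  · rw [hvi]; exact Prod.ext rfl h2
  · rw [hvi]; exact Prod.ext rfl h3
  · omega
  · omega
end

section
/- Let A be a unary NFA with n states q_0, ..., q_{n-1} and start state q_0. Let 2^k be the smallest power of 2 with 2^k ≥ n. Construct A' by adding new states p_0, ..., p_{2^k - 1} with transitions p_i → p_{i+1} for i < 2^k - 1 and p_{2^k - 1} → q_0, keeping all transitions of A, and taking p_0 as the new start state. Then for every i with 0 ≤ i < n: A accepts the word a^i if and only if in A' there is a path of length exactly 2^k from p_i to some accept state of A. -/
/-- The NFA A' obtained from a unary NFA A with states q_0, ..., q_{n-1} by adding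
fresh states p_0, ..., p_{2^k - 1} forming a chain p_0 → p_1 → ⋯ → p_{2^k-1} → q_0,
with new start state p_0 and the same accept states as A. -/
def augNFA {n : ℕ} [NeZero n] (A : NFA Unit (Fin n)) (k : ℕ) :
    NFA Unit (Fin n ⊕ Fin (2 ^ k)) where
  step s _ :=
    match s with
    | Sum.inl q => Sum.inl '' A.step q ()
    | Sum.inr p =>
        if h : (p : ℕ) + 1 < 2 ^ k then {Sum.inr ⟨(p : ℕ) + 1, h⟩} else {Sum.inl 0}
  start := {Sum.inr ⟨0, Nat.two_pow_pos k⟩}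
  accept := Sum.inl '' A.accept

section AuxLemmas

lemma relPath_zero {σ : Type*} (R : σ → σ → Prop) (s t : σ) : RelPath R 0 s t ↔ s = t := by
  constructor
  · rintro ⟨p, h0, hm, _⟩; rw [← h0, hm]
  · rintro rfl; exact ⟨fun _ => s, rfl, rfl, fun i h => absurd h (Nat.not_lt_zero i)⟩

lemma relPath_succ {σ : Type*} (R : σ → σ → Prop) (m : ℕ) (s t : σ) :
    RelPath R (m + 1) s t ↔ ∃ u, R s u ∧ RelPath R m u t := by
  constructor
  · rintro ⟨p, h0, hm, hstep⟩
    exact ⟨p 1, h0 ▸ hstep 0 (Nat.succ_pos m),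
      fun j => p (j + 1), rfl, hm, fun j hj => hstep (j+1) (by omega)⟩
  · rintro ⟨u, hR, p, h0, hm, hstep⟩
    refine ⟨fun j => if j = 0 then s else p (j - 1), by simp, by simp [hm], ?_⟩
    intro j hj
    rcases Nat.eq_zero_or_pos j with rfl | hpos
    · simpa [h0] using hR
    · have h1 : j ≠ 0 := hpos.ne'
      simp only [h1, if_false, Nat.add_sub_cancel]
      have : j - 1 + 1 = j := by omega
      simpa [this] using hstep (j - 1) (by omega)

lemma relPath_append {σ : Type*} (R : σ → σ → Prop) {m m' : ℕ} {s u t : σ}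
    (h1 : RelPath R m s u) (h2 : RelPath R m' u t) : RelPath R (m + m') s t := by
  obtain ⟨p1, p10, p1m, p1s⟩ := h1
  obtain ⟨p2, p20, p2m, p2s⟩ := h2
  refine ⟨fun j => if j < m then p1 j else p2 (j - m), ?_, ?_, ?_⟩
  · rcases Nat.eq_zero_or_pos m with rfl | hm
    · simpa using p20.trans (p1m ▸ p10)
    · simpa [hm] using p10
  · simp [p2m]
  · intro j hj
    rcases lt_trichotomy (j+1) m with h | h | h
    · simpa [h, Nat.lt_of_succ_lt h] using p1s j (by omega)
    · have hjm : j < m := by omega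
      have hj1 : ¬ j + 1 < m := by omega
      simp only [hjm, hj1, if_true, if_false]
      rw [show j + 1 - m = 0 from by omega, p20, ← p1m, ← h]
      exact p1s j (by omega)
    · have hjm : ¬ j < m := by omega
      have hj1 : ¬ j + 1 < m := by omega
      have e : j + 1 - m = (j - m) + 1 := by omega
      simp only [hjm, hj1, if_false, e]
      exact p2s (j - m) (by omega)



lemma evalFrom_replicate {n : ℕ} (A : NFA Unit (Fin n)) (m : ℕ) :
    ∀ (S : Set (Fin n)) (f : Fin n),
    f ∈ A.evalFrom S (List.replicate m ()) ↔ ∃ s ∈ S, RelPath A.rel m s f := by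
  induction m with
  | zero =>
    intro S f
    simp only [List.replicate, NFA.evalFrom, List.foldl_nil]
    constructor
    · intro h; exact ⟨f, h, (relPath_zero _ _ _).2 rfl⟩
    · rintro ⟨s, hs, hp⟩; rwa [← (relPath_zero _ _ _).1 hp]
  | succ m ih =>
    intro S f
    rw [List.replicate_succ]
    have : A.evalFrom S (() :: List.replicate m ()) =
        A.evalFrom (A.stepSet S ()) (List.replicate m ()) := rfl
    rw [this, ih]
    constructor
    · rintro ⟨u, hu, hp⟩
      rw [NFA.mem_stepSet] at hu
      obtain ⟨s, hs, hstep⟩ := hu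
      exact ⟨s, hs, (relPath_succ _ _ _ _).2 ⟨u, ⟨(), hstep⟩, hp⟩⟩
    · rintro ⟨s, hs, hp⟩
      obtain ⟨u, ⟨_, hstep⟩, hp'⟩ := (relPath_succ _ _ _ _).1 hp
      exact ⟨u, NFA.mem_stepSet.2 ⟨s, hs, hstep⟩, hp'⟩

lemma lift_path {n : ℕ} [NeZero n] (A : NFA Unit (Fin n)) (k : ℕ) (m : ℕ) (g f : Fin n)
    (h : RelPath A.rel m g f) :
    RelPath (augNFA A k).rel m (Sum.inl g) (Sum.inl f) := by
  obtain ⟨p, h0, hm, hs⟩ := h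
  refine ⟨fun j => Sum.inl (p j), by simp [h0], by simp [hm], ?_⟩
  intro j hj
  obtain ⟨a, ha⟩ := hs j hj
  exact ⟨(), ⟨p (j+1), by cases a; exact ha, rfl⟩⟩

lemma project_path {n : ℕ} [NeZero n] (A : NFA Unit (Fin n)) (k : ℕ) : ∀ (m : ℕ) (g f : Fin n),
    RelPath (augNFA A k).rel m (Sum.inl g) (Sum.inl f) → RelPath A.rel m g f := by
  intro m
  induction m with
  | zero =>
    intro g f h
    rw [relPath_zero] at h ⊢
    exact Sum.inl.inj h
  | succ m ih =>
    intro g f h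
    obtain ⟨u, ⟨a, ha⟩, hp⟩ := (relPath_succ _ _ _ _).1 h
    simp only [augNFA, Set.mem_image] at ha
    obtain ⟨g', hg', rfl⟩ := ha
    exact (relPath_succ _ _ _ _).2 ⟨g', ⟨(), hg'⟩, ih g' f hp⟩

lemma chain_path {n : ℕ} [NeZero n] (A : NFA Unit (Fin n)) (k : ℕ) (i : ℕ) (hi : i < 2 ^ k) :
    RelPath (augNFA A k).rel (2 ^ k - i) (Sum.inr ⟨i, hi⟩) (Sum.inl 0) := by
  refine ⟨fun j => if h : i + j < 2 ^ k then Sum.inr ⟨i + j, h⟩ else Sum.inl 0, by simp [hi],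
    by simp [show ¬ i + (2 ^ k - i) < 2 ^ k from by omega], ?_⟩
  intro j hj
  have h1 : i + j < 2 ^ k := by omega
  simp only [h1, dif_pos]
  refine ⟨(), ?_⟩
  show _ ∈ (augNFA A k).step (Sum.inr ⟨i + j, h1⟩) ()
  simp only [augNFA]
  by_cases h2 : i + j + 1 < 2 ^ k
  · simp [h2, show i + (j+1) = i + j + 1 from by omega]
  · simp [h2, show ¬ i + (j+1) < 2 ^ k from by omega]

lemma forced_chain {n : ℕ} [NeZero n] (A : NFA Unit (Fin n)) (k : ℕ) (i : ℕ) (hi : i < 2 ^ k)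
    (p : ℕ → Fin n ⊕ Fin (2 ^ k)) (h0 : p 0 = Sum.inr ⟨i, hi⟩)
    (hs : ∀ j < 2 ^ k, (augNFA A k).rel (p j) (p (j + 1))) :
    p (2 ^ k - i) = Sum.inl 0 := by
  have key : ∀ j, (h : i + j < 2 ^ k) → p j = Sum.inr ⟨i + j, h⟩ := by
    intro j
    induction j with
    | zero => intro h; simp [h0]
    | succ j ih =>
      intro h
      have h1 : i + j < 2 ^ k := by omega
      obtain ⟨a, ha⟩ := hs j (by omega)
      rw [ih h1] at ha
      simp only [augNFA, show i + j + 1 < 2 ^ k from by omega, dif_pos,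
        Set.mem_singleton_iff] at ha
      rw [ha]
      first
      | rfl
      | (congr 2; omega)
      | exact congrArg Sum.inr (Fin.ext (by omega))
  have h1 : i + (2 ^ k - i - 1) < 2 ^ k := by omega
  obtain ⟨a, ha⟩ := hs (2 ^ k - i - 1) (by omega)
  rw [key _ h1] at ha
  simp only [augNFA, show ¬ i + (2 ^ k - i - 1) + 1 < 2 ^ k from by omega, dif_neg,
    Set.mem_singleton_iff] at ha
  rwa [show 2 ^ k - i - 1 + 1 = 2 ^ k - i from by omega] at ha

theorem augNFA_accepts_iff_path_aux {n : ℕ} [NeZero n] (A : NFA Unit (Fin n)) (k : ℕ)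
    (hstart : A.start = {(0 : Fin n)})
    (hk : n ≤ 2 ^ k) (_hkmin : ∀ k' : ℕ, n ≤ 2 ^ k' → k ≤ k')
    (i : ℕ) (hi : i < n) :
    List.replicate i () ∈ A.accepts ↔
      ∃ f ∈ A.accept,
        RelPath (augNFA A k).rel (2 ^ k)
          (Sum.inr ⟨i, lt_of_lt_of_le hi hk⟩) (Sum.inl f) := by
  have hik : i < 2 ^ k := lt_of_lt_of_le hi hk
  have haccepts : List.replicate i () ∈ A.accepts ↔
      ∃ f ∈ A.accept, RelPath A.rel i 0 f := by
    rw [NFA.mem_accepts]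
    constructor
    · rintro ⟨f, hf, hev⟩
      have hev' : f ∈ A.evalFrom {(0 : Fin n)} (List.replicate i ()) := by
        rw [← hstart]; exact hev
      rw [evalFrom_replicate] at hev'
      obtain ⟨s, hs, hp⟩ := hev'
      rw [Set.mem_singleton_iff] at hs
      exact ⟨f, hf, hs ▸ hp⟩
    · rintro ⟨f, hf, hp⟩
      refine ⟨f, hf, ?_⟩
      show f ∈ A.evalFrom A.start (List.replicate i ())
      rw [hstart, evalFrom_replicate]
      exact ⟨0, rfl, hp⟩
  rw [haccepts]
  constructor
  · rintro ⟨f, hf, hp⟩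
    refine ⟨f, hf, ?_⟩
    have := relPath_append _ (chain_path A k i hik) (lift_path A k i 0 f hp)
    rwa [show 2 ^ k - i + i = 2 ^ k from by omega] at this
  · rintro ⟨f, hf, p, h0, hm, hs⟩
    refine ⟨f, hf, ?_⟩
    have hmid := forced_chain A k i hik p h0 hs
    apply project_path A k i 0 f
    refine ⟨fun j => p (2 ^ k - i + j), by simpa using hmid, ?_, ?_⟩
    · show p (2 ^ k - i + i) = Sum.inl f
      rw [show 2 ^ k - i + i = 2 ^ k from by omega]; exact hm
    · intro j hj
      simp only
      have h2 := hs (2 ^ k - i + j) (by omega)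
      rwa [show 2 ^ k - i + j + 1 = 2 ^ k - i + (j + 1) from by omega] at h2

end AuxLemmas

/-- Let 2^k be the smallest power of 2 with 2^k ≥ n and let A be a unary NFA with
states q_0, ..., q_{n-1} and start state q_0.  For every i < n, A accepts a^i iff
in A' there is a path of length exactly 2^k from p_i to some accept state of A. -/
theorem augNFA_accepts_iff_path {n : ℕ} [NeZero n] (A : NFA Unit (Fin n)) (k : ℕ)
    (hstart : A.start = {(0 : Fin n)})
    (hk : n ≤ 2 ^ k) (hkmin : ∀ k' : ℕ, n ≤ 2 ^ k' → k ≤ k')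
    (i : ℕ) (hi : i < n) :
    List.replicate i () ∈ A.accepts ↔
      ∃ f ∈ A.accept,
        RelPath (augNFA A k).rel (2 ^ k)
          (Sum.inr ⟨i, lt_of_lt_of_le hi hk⟩) (Sum.inl f) :=
  augNFA_accepts_iff_path_aux A k hstart hk hkmin i hi
end
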